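/- arXiv:1902.07548 — 5 statements merged into one kernel-verified Lean document; each statement's English description precedes it below -/
import Mathlib

section
/- Let G be a finite simple graph on n vertices with degree sum d > 0, and let γ₁,…,γₙ be the eigenvalues of ρ_L(G). Then as (q, r) → (1, 1) jointly, through pairs with q > 0, q ≠ 1 and r ≠ 1, the Sharma–Mittal entropy H_{q,r}(G) tends to the von Neumann entropy −Σᵢ₌₁ⁿ γᵢ·ln(γᵢ), where ln is the natural logarithm and terms with γᵢ = 0 are interpreted as 0. -/
/-!
For a probability vector `γ` put `f q = ∑ γᵢ ^ q`. Then `f 1 = 1` and `f' 1 = ∑ γᵢ log γᵢ`, so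
`X q = log (f q) / (1 - q)` tends to the von Neumann entropy `S` as `q → 1`. Since
`H_{q,r} = (exp ((1 - r) X q) - 1) / (1 - r)` and `(exp t - 1) / t → 1` as `t → 0`, the entropy
tends to `S` jointly in `(q, r)`. The eigenvalues of `ρ_L(G)` form a probability vector because
`tr L(G) = d`.
-/

open Finset

namespace SMG

variable {V : Type*} [Fintype V] [DecidableEq V]

/-- The degree sum of a graph. -/
def degSum (G : SimpleGraph V) [DecidableRel G.Adj] : ℕ := ∑ v, G.degree v

/-- The Laplacian matrix of a simple graph is Hermitian. -/
lemma lap_isHermitian (G : SimpleGraph V) [DecidableRel G.Adj] :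
    (G.lapMatrix ℝ).IsHermitian :=
  (SimpleGraph.posSemidef_lapMatrix ℝ G).isHermitian

/-- The eigenvalues (with multiplicity) of the density matrix `ρ_L(G) = L(G)/d`,
namely `γ v = λ v / d`. -/
noncomputable def lapDensityEigen (G : SimpleGraph V) [DecidableRel G.Adj] : V → ℝ :=
  fun v => (lap_isHermitian G).eigenvalues v / (degSum G : ℝ)

/-- Sharma–Mittal entropy of a graph based on its (combinatorial) Laplacian:
`H_{q,r}(G) = (1/(1-r)) * ((Σ γᵢ^q)^((1-r)/(1-q)) - 1)` with real powers. -/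
noncomputable def lapSM (G : SimpleGraph V) [DecidableRel G.Adj] (q r : ℝ) : ℝ :=
  (1 / (1 - r)) *
    ((∑ v, lapDensityEigen G v ^ q) ^ ((1 - r) / (1 - q)) - 1)

open Filter Topology Real

section SharmaMittal

variable {ι : Type*} [Fintype ι]

noncomputable def sharmaMittal (γ : ι → ℝ) (q r : ℝ) : ℝ :=
  (1 / (1 - r)) * ((∑ i, γ i ^ q) ^ ((1 - r) / (1 - q)) - 1)

theorem hasDerivAt_const_rpow_of_nonneg {a x : ℝ} (ha : 0 ≤ a) (hx : x ≠ 0) :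
    HasDerivAt (fun y => a ^ y) (a ^ x * log a) x := by
  rcases ha.eq_or_lt with rfl | ha
  · rw [zero_rpow hx, zero_mul]
    apply (hasDerivAt_const x (0 : ℝ)).congr_of_eventuallyEq
    filter_upwards [eventually_ne_nhds hx] with y hy
    exact zero_rpow hy
  · exact (hasStrictDerivAt_const_rpow ha x).hasDerivAt

theorem hasDerivAt_sum_rpow {γ : ι → ℝ} (hγ : ∀ i, 0 ≤ γ i) {x : ℝ} (hx : x ≠ 0) :
    HasDerivAt (fun q => ∑ i, γ i ^ q) (∑ i, γ i ^ x * log (γ i)) x :=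
  HasDerivAt.fun_sum fun i _ => hasDerivAt_const_rpow_of_nonneg (hγ i) hx

theorem sum_rpow_pos {γ : ι → ℝ} (hγ : ∀ i, 0 ≤ γ i) (hsum : 0 < ∑ i, γ i) (q : ℝ) :
    0 < ∑ i, γ i ^ q := by
  obtain ⟨i, -, hi⟩ := exists_lt_of_sum_lt (s := univ) (f := 0) (g := γ) (by simpa using hsum)
  exact sum_pos' (fun j _ => rpow_nonneg (hγ j) q) ⟨i, mem_univ i, rpow_pos_of_pos hi q⟩

theorem tendsto_log_div_one_sub {f : ℝ → ℝ} {f' : ℝ} (hf : HasDerivAt f f' 1) (hf1 : f 1 = 1) :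
    Tendsto (fun q => log (f q) / (1 - q)) (𝓝[≠] 1) (𝓝 (-f')) := by
  have hlog : HasDerivAt (fun q => log (f q)) f' 1 := by
    simpa [hf1] using hf.log (by simp [hf1])
  refine (hasDerivAt_iff_tendsto_slope.mp hlog).neg.congr fun q => ?_
  rw [slope_def_field, hf1, log_one, sub_zero, ← div_neg, neg_sub]

theorem tendsto_exp_mul_sub_one_div {α : Type*} {l : Filter α} {u x : α → ℝ} {S : ℝ}
    (hu : Tendsto u l (𝓝 0)) (hu0 : ∀ᶠ a in l, u a ≠ 0) (hx : Tendsto x l (𝓝 S)) :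
    Tendsto (fun a => (exp (u a * x a) - 1) / u a) l (𝓝 S) := by
  have hslope : Tendsto (fun a => dslope exp 0 (u a * x a)) l (𝓝 1) := by
    have hc : ContinuousAt (dslope exp 0) 0 :=
      continuousAt_dslope_same.mpr differentiableAt_exp
    simpa [dslope_same, Function.comp_def] using hc.tendsto.comp (by simpa using hu.mul hx)
  refine (by simpa using hx.mul hslope : Tendsto (fun a => x a * dslope exp 0 (u a * x a)) l _)
    |>.congr' ?_
  filter_upwards [hu0] with a ha
  -- `exp t - 1 = t * dslope exp 0 t` holds also at `t = 0`, so `x a` may vanish.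
  have := sub_smul_dslope exp 0 (u a * x a)
  rw [sub_zero, smul_eq_mul, exp_zero] at this
  rw [← this]
  field_simp

theorem tendsto_sharmaMittal {γ : ι → ℝ} (hγ : ∀ i, 0 ≤ γ i) (hsum : ∑ i, γ i = 1) :
    Tendsto (fun p : ℝ × ℝ => sharmaMittal γ p.1 p.2)
      (𝓝[{p | p.1 ≠ 1 ∧ p.2 ≠ 1}] (1, 1)) (𝓝 (-∑ i, γ i * log (γ i))) := by
  set X : ℝ → ℝ := fun q => log (∑ i, γ i ^ q) / (1 - q)
  have hX : Tendsto X (𝓝[≠] 1) (𝓝 (-∑ i, γ i * log (γ i))) :=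
    tendsto_log_div_one_sub (by simpa using hasDerivAt_sum_rpow hγ one_ne_zero) (by simp [hsum])
  have hq : Tendsto Prod.fst (𝓝[{p : ℝ × ℝ | p.1 ≠ 1 ∧ p.2 ≠ 1}] (1, 1)) (𝓝[≠] 1) :=
    continuous_fst.continuousWithinAt.tendsto_nhdsWithin fun p hp => hp.1
  have hr : Tendsto (fun p : ℝ × ℝ => 1 - p.2) (𝓝[{p | p.1 ≠ 1 ∧ p.2 ≠ 1}] (1, 1)) (𝓝 0) :=
    ((continuous_const.sub continuous_snd).tendsto' (1, 1) 0 (by simp)).mono_left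
      nhdsWithin_le_nhds
  have hr0 : ∀ᶠ p : ℝ × ℝ in 𝓝[{p | p.1 ≠ 1 ∧ p.2 ≠ 1}] (1, 1), 1 - p.2 ≠ 0 := by
    filter_upwards [self_mem_nhdsWithin] with p hp using sub_ne_zero.mpr hp.2.symm
  refine (tendsto_exp_mul_sub_one_div hr hr0 (hX.comp hq)).congr fun p => ?_
  have hpos := sum_rpow_pos hγ (hsum ▸ one_pos) p.1
  rw [sharmaMittal, one_div_mul_eq_div, rpow_def_of_pos hpos]
  congr 3
  simp only [Function.comp_apply, X]
  ring

end SharmaMittal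

theorem trace_lapMatrix {R : Type*} [Ring R] (G : SimpleGraph V) [DecidableRel G.Adj] :
    (G.lapMatrix R).trace = degSum G := by
  simp [Matrix.trace, SimpleGraph.lapMatrix, SimpleGraph.degMatrix, degSum]

theorem lapDensityEigen_nonneg (G : SimpleGraph V) [DecidableRel G.Adj] (v : V) :
    0 ≤ lapDensityEigen G v :=
  div_nonneg ((SimpleGraph.posSemidef_lapMatrix ℝ G).eigenvalues_nonneg v) (Nat.cast_nonneg _)

theorem sum_lapDensityEigen (G : SimpleGraph V) [DecidableRel G.Adj] (hd : 0 < degSum G) :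
    ∑ v, lapDensityEigen G v = 1 := by
  have htrace : ∑ v, (lap_isHermitian G).eigenvalues v = degSum G :=
    (lap_isHermitian G).trace_eq_sum_eigenvalues.symm.trans (trace_lapMatrix G)
  simp only [lapDensityEigen]
  rw [← sum_div, htrace, div_self (by positivity)]

theorem lapSM_eq_sharmaMittal (G : SimpleGraph V) [DecidableRel G.Adj] :
    lapSM G = sharmaMittal (lapDensityEigen G) :=
  rfl

/-- As `(q,r) → (1,1)` jointly, through pairs with `q > 0`, `q ≠ 1`, `r ≠ 1`, the Sharma–Mittal
entropy `H_{q,r}(G)` tends to the von Neumann entropy `−Σ γᵢ · ln γᵢ`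
(with `ln 0 = 0`, so terms with `γᵢ = 0` contribute `0`). -/
theorem lapSM_tendsto_vonNeumann (G : SimpleGraph V) [DecidableRel G.Adj]
    (hd : 0 < degSum G) :
    Filter.Tendsto (fun p : ℝ × ℝ => lapSM G p.1 p.2)
      (nhdsWithin (1, 1) {p : ℝ × ℝ | 0 < p.1 ∧ p.1 ≠ 1 ∧ p.2 ≠ 1})
      (nhds (-∑ v, lapDensityEigen G v * Real.log (lapDensityEigen G v))) := by
  rw [lapSM_eq_sharmaMittal]
  exact (tendsto_sharmaMittal (lapDensityEigen_nonneg G) (sum_lapDensityEigen G hd)).mono_left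
    (nhdsWithin_mono _ fun p hp => hp.2)

end SMG
end

section
/- Let n ≥ 3 and let Cₙ be the cycle graph on n vertices. For real parameters q > 0, q ≠ 1 and r ≠ 1, the Sharma–Mittal entropy of Cₙ based on the Laplacian satisfies H_{q,r}(Cₙ) = (1/(1−r))·[(2/n)^{q(1−r)/(1−q)} · (Σ_{j=0}^{n−1} (sin(πj/n))^{2q})^{(1−r)/(1−q)} − 1]. -/
open Finset

/-!
The Laplacian of `Cₙ` is circulant, so the Fourier vectors `i ↦ ω^(ik)`, `ω = e^(2πi/n)`, are
eigenvectors with eigenvalues `2 - ω^k - ω^(-k) = 4 sin²(πk/n)`. They are the columns of the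
Vandermonde matrix of the `n` distinct `n`-th roots of unity, which is invertible, so this list is
the whole spectrum with multiplicity, and the characteristic polynomial splits accordingly.
Dividing by the degree sum `2n` gives `γₖ = (2/n) sin²(πk/n)`, and `(2/n)^q` factors out of the
power sum.
-/

open Polynomial

theorem pow_finVal_add {M : Type*} [Monoid M] {N : ℕ} {μ : M} (hμ : μ ^ N = 1) (i j : Fin N) :
    μ ^ (i + j).val = μ ^ i.val * μ ^ j.val := by
  rw [Fin.val_add, ← pow_eq_pow_mod _ hμ, pow_add]

theorem Complex.two_sub_exp_mul_I_sub_inv (θ : ℝ) :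
    2 - exp (θ * I) - (exp (θ * I))⁻¹ = ((4 * Real.sin (θ / 2) ^ 2 : ℝ) : ℂ) := by
  rw [← exp_neg, ← neg_mul, exp_mul_I, exp_mul_I, cos_neg, sin_neg]
  have hcos : cos (θ : ℂ) = 1 - 2 * sin (θ / 2) ^ 2 := by
    rw [← cos_two_mul_eq_one_sub, mul_div_cancel₀ _ two_ne_zero]
  push_cast
  rw [hcos]
  ring

theorem Real.sin_pi_mul_div_nonneg {j N : ℕ} (hj : j ≤ N) : 0 ≤ sin (Real.pi * j / N) := by
  refine sin_nonneg_of_nonneg_of_le_pi (by positivity)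
    (div_le_of_le_mul₀ (by positivity) pi_pos.le ?_)
  gcongr

theorem Polynomial.roots_fintype_prod_X_sub_C {R ι : Type*} [CommRing R] [IsDomain R]
    [Fintype ι] (a : ι → R) : (∏ i, (X - C (a i))).roots = univ.val.map a := by
  have := roots_multiset_prod_X_sub_C (univ.val.map a)
  rwa [Multiset.map_map] at this

namespace Matrix

variable {m R : Type*} [Fintype m] [DecidableEq m] [CommRing R]

theorem charpoly_eq_prod_of_mul_eq_mul_diagonal {A P : Matrix m m R} (hP : IsUnit P)
    {d : m → R} (h : A * P = P * diagonal d) : A.charpoly = ∏ i, (X - C (d i)) := by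
  obtain ⟨u, rfl⟩ := hP
  have hA : A = u.val * (diagonal d * u⁻¹.val) := by
    rw [← mul_assoc, ← h, Units.mul_inv_cancel_right]
  rw [hA, charpoly_mul_comm, Units.inv_mul_cancel_right, charpoly_diagonal]

theorem IsHermitian.sum_comp_eigenvalues_eq {A : Matrix m m ℝ} (hA : A.IsHermitian)
    {ι : Type*} [Fintype ι] {μ : ι → ℝ} (h : A.charpoly = ∏ j, (X - C (μ j)))
    (f : ℝ → ℝ) :
    ∑ i, f (hA.eigenvalues i) = ∑ j, f (μ j) := by
  have hroots : univ.val.map hA.eigenvalues = univ.val.map μ := by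
    rw [← roots_fintype_prod_X_sub_C hA.eigenvalues, ← roots_fintype_prod_X_sub_C μ, ← h]
    exact congrArg roots hA.charpoly_eq.symm
  calc ∑ i, f (hA.eigenvalues i) = ((univ.val.map hA.eigenvalues).map f).sum := by
        rw [Multiset.map_map]; rfl
    _ = ∑ j, f (μ j) := by rw [hroots, Multiset.map_map]; rfl

end Matrix

namespace SimpleGraph

open Matrix

theorem map_lapMatrix {V : Type*} [Fintype V] [DecidableEq V] (G : SimpleGraph V)
    [DecidableRel G.Adj] {R S : Type*} [Ring R] [Ring S] (f : R →+* S) :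
    (G.lapMatrix R).map f = G.lapMatrix S := by
  ext i j
  by_cases hij : i = j
  · subst hij; simp [lapMatrix, degMatrix]
  · simp [lapMatrix, degMatrix, hij, adjMatrix_apply]

theorem cycleGraph_lapMatrix_mulVec_of_shift {n : ℕ} {R : Type*} [CommRing R]
    {x : Fin (n + 3) → R} {a b : R} (hsucc : ∀ i, x (i + 1) = a * x i)
    (hpred : ∀ i, x (i - 1) = b * x i) :
    (cycleGraph (n + 3)).lapMatrix R *ᵥ x = (2 - a - b) • x := by
  ext i
  have hne : i - 1 ≠ i + 1 := Finset.card_pair_eq_two_iff.mp <| by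
    rw [← cycleGraph_degree_two_le, cycleGraph_degree_three_le]
  rw [lapMatrix_mulVec_apply, cycleGraph_degree_three_le, cycleGraph_neighborFinset,
    Finset.sum_pair hne, hsucc, hpred, Pi.smul_apply, smul_eq_mul]
  push_cast
  ring

theorem cycleGraph_lapMatrix_mul_vandermonde_transpose {n : ℕ} {K : Type*} [Field K]
    {μ : Fin (n + 3) → K} (hμ : ∀ k, μ k ^ (n + 3) = 1) :
    (cycleGraph (n + 3)).lapMatrix K * (vandermonde μ)ᵀ =
      (vandermonde μ)ᵀ * diagonal fun k => 2 - μ k - (μ k)⁻¹ := by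
  ext i k
  have hμ0 : μ k ≠ 0 := fun h0 => by simpa [h0] using hμ k
  have hsucc (i : Fin (n + 3)) : μ k ^ (i + 1).val = μ k * μ k ^ i.val := by
    rw [pow_finVal_add (hμ k), Fin.val_one, pow_one, mul_comm]
  have hpred (i : Fin (n + 3)) : μ k ^ (i - 1).val = (μ k)⁻¹ * μ k ^ i.val := by
    rw [eq_inv_mul_iff_mul_eq₀ hμ0, ← hsucc, sub_add_cancel]
  have hcol := congrFun
    (cycleGraph_lapMatrix_mulVec_of_shift (x := fun i => μ k ^ i.val) hsucc hpred) i
  rw [mul_diagonal]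
  simpa [mul_apply, mulVec, dotProduct, mul_comm] using hcol

theorem charpoly_lapMatrix_cycleGraph (n : ℕ) :
    ((cycleGraph (n + 3)).lapMatrix ℝ).charpoly =
      ∏ k : Fin (n + 3), (X - C (4 * Real.sin (Real.pi * k / (n + 3 : ℕ)) ^ 2)) := by
  set N := n + 3
  set ω := Complex.exp (2 * Real.pi * Complex.I / N)
  have hω : IsPrimitiveRoot ω N := Complex.isPrimitiveRoot_exp N (by omega)
  set μ : Fin N → ℂ := fun k => ω ^ k.val
  have hμ (k : Fin N) : μ k ^ N = 1 := by
    rw [← pow_mul, mul_comm, pow_mul, hω.pow_eq_one, one_pow]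
  have hdet : IsUnit (vandermonde μ)ᵀ := by
    rw [isUnit_iff_isUnit_det, det_transpose]
    exact (det_vandermonde_ne_zero_iff.mpr
      fun i j hij => Fin.ext (hω.pow_inj i.isLt j.isLt hij)).isUnit
  have heig (k : Fin N) :
      2 - μ k - (μ k)⁻¹ = ((4 * Real.sin (Real.pi * k / N) ^ 2 : ℝ) : ℂ) := by
    have : μ k = Complex.exp (↑(2 * (Real.pi * k / N)) * Complex.I) := by
      rw [show μ k = ω ^ k.val from rfl, ← Complex.exp_nat_mul]; push_cast; ring_nf
    rw [this, Complex.two_sub_exp_mul_I_sub_inv, mul_div_cancel_left₀ _ two_ne_zero]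
  apply Polynomial.map_injective (algebraMap ℝ ℂ) (algebraMap ℝ ℂ).injective
  rw [← charpoly_map, map_lapMatrix, charpoly_eq_prod_of_mul_eq_mul_diagonal hdet
    (cycleGraph_lapMatrix_mul_vandermonde_transpose hμ), Polynomial.map_prod]
  simp [heig]

end SimpleGraph

namespace SMG

open SimpleGraph

theorem degSum_cycleGraph (n : ℕ) : degSum (cycleGraph (n + 3)) = 2 * (n + 3) := by
  simp [degSum, cycleGraph_degree_three_le, mul_comm]

theorem sum_lapDensityEigen_cycleGraph_rpow (n : ℕ) (q : ℝ) :
    ∑ v, lapDensityEigen (cycleGraph (n + 3)) v ^ q =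
      (2 / (n + 3 : ℕ)) ^ q *
        ∑ j ∈ range (n + 3), Real.sin (Real.pi * j / (n + 3 : ℕ)) ^ (2 * q) := by
  set N : ℝ := ((n + 3 : ℕ) : ℝ)
  have hterm {j : ℕ} (hj : j < n + 3) :
      (4 * Real.sin (Real.pi * j / N) ^ 2 / (2 * N)) ^ q =
        (2 / N) ^ q * Real.sin (Real.pi * j / N) ^ (2 * q) := by
    rw [show 4 * Real.sin (Real.pi * j / N) ^ 2 / (2 * N) = 2 / N * Real.sin (Real.pi * j / N) ^ 2
        by field_simp; ring, Real.mul_rpow (by positivity) (by positivity),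
      show (2 : ℝ) * q = (2 : ℕ) * q by norm_num,
      Real.rpow_natCast_mul (Real.sin_pi_mul_div_nonneg hj.le)]
  have hd : (degSum (cycleGraph (n + 3)) : ℝ) = 2 * N := by
    simp [N, degSum_cycleGraph]
  calc ∑ v, lapDensityEigen (cycleGraph (n + 3)) v ^ q
      = ∑ v, ((lap_isHermitian _).eigenvalues v / (2 * N)) ^ q := by
        simp only [lapDensityEigen, hd]
    _ = ∑ k : Fin (n + 3), (4 * Real.sin (Real.pi * k / N) ^ 2 / (2 * N)) ^ q :=
        (lap_isHermitian _).sum_comp_eigenvalues_eq (charpoly_lapMatrix_cycleGraph n)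
          fun x => (x / (2 * N)) ^ q
    _ = ∑ j ∈ range (n + 3), (2 / N) ^ q * Real.sin (Real.pi * j / N) ^ (2 * q) := by
        rw [Fin.sum_univ_eq_sum_range fun j => (4 * Real.sin (Real.pi * j / N) ^ 2 / (2 * N)) ^ q]
        exact sum_congr rfl fun j hj => hterm (mem_range.mp hj)
    _ = _ := (mul_sum ..).symm

theorem lapSM_cycleGraph_general (n : ℕ) (hn : 3 ≤ n) (q r : ℝ) :
    lapSM (SimpleGraph.cycleGraph n) q r =
      (1 / (1 - r)) *
        (((2 / n : ℝ) ^ (q * (1 - r) / (1 - q))) *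
            (∑ j ∈ Finset.range n, Real.sin (Real.pi * j / n) ^ (2 * q)) ^ ((1 - r) / (1 - q))
          - 1) := by
  obtain ⟨m, rfl⟩ : ∃ m, n = m + 3 := ⟨n - 3, by omega⟩
  have hsum : 0 ≤ ∑ j ∈ range (m + 3), Real.sin (Real.pi * j / (m + 3 : ℕ)) ^ (2 * q) :=
    sum_nonneg fun j hj => Real.rpow_nonneg (Real.sin_pi_mul_div_nonneg (mem_range.mp hj).le) _
  rw [lapSM, sum_lapDensityEigen_cycleGraph_rpow, Real.mul_rpow (by positivity) hsum,
    ← Real.rpow_mul (by positivity), mul_div_assoc]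

/-- Sharma–Mittal entropy of the cycle graph `Cₙ` (`n ≥ 3`) based on the Laplacian:
`H_{q,r}(Cₙ) = (1/(1−r))·[(2/n)^{q(1−r)/(1−q)}·(Σ_{j=0}^{n−1} sin(πj/n)^{2q})^{(1−r)/(1−q)} − 1]`. -/
theorem lapSM_cycleGraph (n : ℕ) (hn : 3 ≤ n) (q r : ℝ)
    (hq0 : 0 < q) (hq1 : q ≠ 1) (hr : r ≠ 1) :
    lapSM (SimpleGraph.cycleGraph n) q r =
      (1 / (1 - r)) *
        (((2 / n : ℝ) ^ (q * (1 - r) / (1 - q))) *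
            (∑ j ∈ Finset.range n, Real.sin (Real.pi * j / n) ^ (2 * q)) ^ ((1 - r) / (1 - q))
          - 1) :=
  lapSM_cycleGraph_general n hn q r

end SMG
end

section
/- Let n ≥ 2 and let Pₙ be the path graph on n vertices. For real parameters q > 0, q ≠ 1 and r ≠ 1, the Sharma–Mittal entropy of Pₙ based on the Laplacian satisfies H_{q,r}(Pₙ) = (1/(1−r))·[(2/(n−1))^{q(1−r)/(1−q)} · (Σ_{j=0}^{n−1} (sin(πj/(2n)))^{2q})^{(1−r)/(1−q)} − 1]. -/
open Finset

namespace SMG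

variable {V : Type*} [Fintype V] [DecidableEq V]

instance (n : ℕ) : DecidableRel (SimpleGraph.pathGraph n).Adj := fun _ _ =>
  decidable_of_iff _ SimpleGraph.pathGraph_adj.symm

/-!
The vectors `k ↦ cos (π j (2k + 1) / (2n))`, `j = 0, …, n - 1`, are eigenvectors of `L(Pₙ)` with
eigenvalues `2 - 2 cos (π j / n) = 4 sin² (π j / (2n))`. These are `n` distinct numbers, so they
are the whole spectrum. As `d = 2(n - 1)`, `γ_j ^ q = (2 / (n - 1)) ^ q * sin (π j / (2n)) ^ (2q)`,
and the formula follows from `(a b) ^ s = a ^ s b ^ s` and `(a ^ s) ^ t = a ^ (s t)` for `a, b ≥ 0`.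
-/

open SimpleGraph Matrix Real

theorem _root_.Matrix.IsHermitian.exists_eigenvalues_eq_of_mulVec_eq_smul
    {𝕜 n : Type*} [RCLike 𝕜] [Fintype n] [DecidableEq n] {A : Matrix n n 𝕜}
    (hA : A.IsHermitian) {μ : ℝ} {v : n → 𝕜} (hv : v ≠ 0) (h : A *ᵥ v = (μ : 𝕜) • v) :
    ∃ i, hA.eigenvalues i = μ := by
  have hμ : Module.End.HasEigenvalue (toLin' A) (μ : 𝕜) :=
    Module.End.hasEigenvalue_of_hasEigenvector ⟨Module.End.mem_eigenspace_iff.mpr h, hv⟩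
  have hspec := hμ.mem_spectrum
  rw [spectrum_toLin', hA.spectrum_eq_image_range] at hspec
  obtain ⟨_, ⟨i, rfl⟩, hi⟩ := hspec
  exact ⟨i, RCLike.ofReal_injective hi⟩

/-- `n` distinct eigenvalues of an `n × n` Hermitian matrix are all of its eigenvalues,
each with multiplicity one. -/
theorem _root_.Matrix.IsHermitian.sum_comp_eigenvalues_eq_s5
    {𝕜 n M : Type*} [RCLike 𝕜] [Fintype n] [DecidableEq n] [AddCommMonoid M]
    {A : Matrix n n 𝕜} (hA : A.IsHermitian) {μ : n → ℝ} (hμ : Function.Injective μ)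
    (hvec : ∀ j, ∃ v ≠ 0, A *ᵥ v = (μ j : 𝕜) • v) (F : ℝ → M) :
    ∑ i, F (hA.eigenvalues i) = ∑ j, F (μ j) := by
  choose e he using fun j ↦
    have ⟨_, hv, h⟩ := hvec j
    hA.exists_eigenvalues_eq_of_mulVec_eq_smul hv h
  have he_inj : Function.Injective e := fun a b hab ↦ hμ (by rw [← he a, ← he b, hab])
  exact (Fintype.sum_bijective e he_inj.bijective_of_finite _ _ fun j ↦ by rw [he]).symm

theorem _root_.Fin.sum_ite_intCast_eq {M : Type*} [AddCommMonoid M] (n : ℕ) (c : ℤ)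
    (g : ℤ → M) :
    (∑ x : Fin n, if (x : ℤ) = c then g x else 0) = if 0 ≤ c ∧ c < n then g c else 0 := by
  split_ifs with hc
  · rw [Fintype.sum_eq_single ⟨c.toNat, by omega⟩
      fun x hx ↦ if_neg fun h ↦ hx (Fin.ext (by simp only; omega))]
    simp [hc.1]
  · exact sum_eq_zero fun x _ ↦ if_neg (by omega)

theorem pathGraph_sum_ite_adj {M : Type*} [AddCommMonoid M] {n : ℕ} (k : Fin n) (g : ℤ → M) :
    (∑ u : Fin n, if (pathGraph n).Adj k u then g u else 0) =
      (if k.val + 1 < n then g (k + 1) else 0) + (if 0 < k.val then g (k - 1) else 0) := by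
  have hsplit : ∀ u : Fin n, (if (pathGraph n).Adj k u then g u else 0) =
      (if (u : ℤ) = k + 1 then g u else 0) + (if (u : ℤ) = k - 1 then g u else 0) := by
    intro u
    simp only [pathGraph_adj]
    split_ifs <;> first | (exfalso; omega) | simp
  simp only [hsplit, sum_add_distrib, Fin.sum_ite_intCast_eq]
  congr 1 <;> apply if_congr <;> first | rfl | omega

theorem pathGraph_degree {n : ℕ} (k : Fin n) :
    (pathGraph n).degree k = (if k.val + 1 < n then 1 else 0) + (if 0 < k.val then 1 else 0) := by
  have h := (pathGraph n).degree_eq_sum_if_adj (R := ℕ) k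
  rw [Nat.cast_id] at h
  rw [h, pathGraph_sum_ite_adj k fun _ ↦ 1]

theorem degSum_pathGraph (n : ℕ) : degSum (pathGraph n) = 2 * (n - 1) := by
  rw [degSum, Fintype.sum_congr _ _ pathGraph_degree, sum_add_distrib,
    Fin.sum_univ_eq_sum_range (fun m ↦ if m + 1 < n then 1 else 0),
    Fin.sum_univ_eq_sum_range (fun m ↦ if 0 < m then 1 else 0), sum_boole, sum_boole,
    show {m ∈ range n | m + 1 < n} = range (n - 1) by
      ext; simp only [mem_filter, mem_range]; omega,
    show {m ∈ range n | 0 < m} = Ico 1 n by ext; simp only [mem_filter, mem_range, mem_Ico]; omega]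
  simp only [card_range, Nat.card_Ico, Nat.cast_id]
  omega

theorem lapMatrix_pathGraph_mulVec_apply {R : Type*} [CommRing R] {n : ℕ} (f : ℤ → R) (k : Fin n) :
    ((pathGraph n).lapMatrix R *ᵥ fun i ↦ f i) k =
      (if k.val + 1 < n then f k - f (k + 1) else 0) +
        (if 0 < k.val then f k - f (k - 1) else 0) := by
  rw [lapMatrix_mulVec_apply, pathGraph_degree, neighborFinset_eq_filter, sum_filter,
    pathGraph_sum_ite_adj k f]
  split_ifs <;> push_cast <;> ring

/-- `f` solves the eigenvalue equation of the infinite path `ℤ` and is symmetric about `-1/2` and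
`n - 1/2`; these reflections stand in for the missing neighbours of the two end vertices. -/
theorem lapMatrix_pathGraph_mulVec_eq_smul {R : Type*} [CommRing R] {n : ℕ} {f : ℤ → R} {μ : R}
    (h_left : f (-1) = f 0) (h_right : f n = f (n - 1))
    (hrec : ∀ k : ℤ, 2 * f k - f (k - 1) - f (k + 1) = μ * f k) :
    (pathGraph n).lapMatrix R *ᵥ (fun i : Fin n ↦ f i) = μ • fun i : Fin n ↦ f i := by
  funext k
  rw [lapMatrix_pathGraph_mulVec_apply, Pi.smul_apply, smul_eq_mul, ← hrec]
  have hk := k.isLt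
  split_ifs with h1 h2
  · ring
  · rw [show (k : ℤ) = 0 by omega, zero_sub, h_left]; ring
  · obtain hk : (k : ℤ) = n - 1 := by omega
    rw [hk, sub_add_cancel, h_right]; ring
  · obtain hk0 : (k : ℤ) = 0 := by omega
    have h_one : f 1 = f 0 := by simpa [show (n : ℤ) = 1 by omega] using h_right
    simp only [hk0, zero_sub, zero_add, h_left, h_one]; ring

theorem exists_eigenvector_lapMatrix_pathGraph {n j : ℕ} (hj : j < n) :
    ∃ v ≠ 0, (pathGraph n).lapMatrix ℝ *ᵥ v = (2 - 2 * cos (π * j / n)) • v := by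
  set θ := π * j / (2 * n)
  have hn : (0 : ℝ) < n := by exact_mod_cast j.zero_le.trans_lt hj
  have hθ : 2 * n * θ = π * j := by simp only [θ]; field_simp
  refine ⟨fun i : Fin n ↦ cos (θ * (2 * (i : ℤ) + 1)), fun h ↦ ?_, ?_⟩
  · have hθ_lt : θ < π / 2 := by
      have : (j : ℝ) / n < 1 := (div_lt_one hn).mpr (by exact_mod_cast hj)
      calc θ = π / 2 * (j / n) := by ring
        _ < π / 2 * 1 := by gcongr
        _ = π / 2 := mul_one _
    have hcos := cos_pos_of_mem_Ioo ⟨by linarith [pi_pos, show 0 ≤ θ by positivity], hθ_lt⟩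
    simpa [hcos.ne'] using congrFun h ⟨0, by omega⟩
  · refine lapMatrix_pathGraph_mulVec_eq_smul (f := fun k : ℤ ↦ cos (θ * (2 * k + 1)))
      ?_ ?_ fun k ↦ ?_
    · push_cast
      rw [← cos_neg]; ring_nf
    · have hsin : sin (π * j) = 0 := by rw [mul_comm]; exact sin_nat_mul_pi j
      push_cast
      rw [show θ * (2 * n + 1) = π * j + θ by linear_combination hθ,
        show θ * (2 * (n - 1) + 1) = π * j - θ by linear_combination hθ,
        cos_add, cos_sub, hsin]
      ring
    · push_cast
      rw [show π * j / n = 2 * θ by simp only [θ]; field_simp,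
        show θ * (2 * (k - 1) + 1) = θ * (2 * k + 1) - 2 * θ by ring,
        show θ * (2 * (k + 1) + 1) = θ * (2 * k + 1) + 2 * θ by ring, cos_sub, cos_add]
      ring

theorem sin_pi_mul_div_two_mul_nonneg {j n : ℕ} (hj : j ≤ 2 * n) :
    0 ≤ sin (π * j / (2 * n)) :=
  sin_nonneg_of_nonneg_of_le_pi (by positivity)
    (div_le_of_le_mul₀ (by positivity) pi_pos.le (by gcongr; exact_mod_cast hj))

theorem sum_comp_eigenvalues_lapMatrix_pathGraph {M : Type*} [AddCommMonoid M] (n : ℕ)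
    (F : ℝ → M) :
    ∑ i, F ((lap_isHermitian (pathGraph n)).eigenvalues i) =
      ∑ j ∈ range n, F (2 - 2 * cos (π * j / n)) := by
  have hmem (j : Fin n) : π * j / n ∈ Set.Icc 0 π :=
    ⟨by positivity, div_le_of_le_mul₀ (by positivity) pi_pos.le
      (by gcongr; exact_mod_cast j.isLt.le)⟩
  have hinj : Function.Injective fun j : Fin n ↦ 2 - 2 * cos (π * j / n) := by
    intro j j' h
    have h_arg := injOn_cos (hmem j) (hmem j') (by simp only at h; linarith)
    have hn : (n : ℝ) ≠ 0 := by exact_mod_cast (j.pos).ne'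
    field_simp [pi_ne_zero] at h_arg
    exact Fin.ext (by exact_mod_cast h_arg)
  rw [(lap_isHermitian _).sum_comp_eigenvalues_eq_s5 hinj
    (fun j ↦ exists_eigenvector_lapMatrix_pathGraph j.isLt) F]
  exact Fin.sum_univ_eq_sum_range (fun j ↦ F (2 - 2 * cos (π * j / n))) n

theorem sum_lapDensityEigen_rpow_pathGraph {n : ℕ} (hn : 2 ≤ n) (q : ℝ) :
    ∑ v, lapDensityEigen (pathGraph n) v ^ q =
      (2 / ((n : ℝ) - 1)) ^ q * ∑ j ∈ range n, sin (π * j / (2 * n)) ^ (2 * q) := by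
  have hn1 : (0 : ℝ) < n - 1 := by
    have : (2 : ℝ) ≤ n := by exact_mod_cast hn
    linarith
  have hd : (degSum (pathGraph n) : ℝ) = 2 * (n - 1) := by
    rw [degSum_pathGraph]; push_cast [Nat.cast_sub (by omega : 1 ≤ n)]; ring
  simp only [lapDensityEigen]
  rw [sum_comp_eigenvalues_lapMatrix_pathGraph n fun t ↦ (t / degSum (pathGraph n)) ^ q, mul_sum]
  refine sum_congr rfl fun j hj ↦ ?_
  have hγ : (2 - 2 * cos (π * j / n)) / degSum (pathGraph n) =
      2 / (n - 1) * sin (π * j / (2 * n)) ^ 2 := by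
    rw [hd, sin_sq_eq_half_sub, show 2 * (π * j / (2 * n)) = π * j / n by field_simp]
    field_simp
  have hsin : 0 ≤ sin (π * j / (2 * n)) :=
    sin_pi_mul_div_two_mul_nonneg (by have := mem_range.mp hj; omega)
  rw [hγ, mul_rpow (by positivity) (sq_nonneg _), ← rpow_natCast_mul hsin 2 q, Nat.cast_ofNat]

theorem lapSM_pathGraph_general (n : ℕ) (hn : 2 ≤ n) (q r : ℝ) :
    lapSM (SimpleGraph.pathGraph n) q r =
      (1 / (1 - r)) *
        (((2 / ((n : ℝ) - 1)) ^ (q * (1 - r) / (1 - q))) *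
            (∑ j ∈ Finset.range n, Real.sin (Real.pi * j / (2 * n)) ^ (2 * q)) ^ ((1 - r) / (1 - q))
          - 1) := by
  have hn1 : (1 : ℝ) ≤ n := by exact_mod_cast (by omega : 1 ≤ n)
  have hc : 0 ≤ 2 / ((n : ℝ) - 1) := div_nonneg zero_le_two (by linarith)
  have hS : 0 ≤ ∑ j ∈ range n, sin (π * j / (2 * n)) ^ (2 * q) := sum_nonneg fun j hj ↦
    rpow_nonneg (sin_pi_mul_div_two_mul_nonneg (by have := mem_range.mp hj; omega)) _
  rw [lapSM, sum_lapDensityEigen_rpow_pathGraph hn, mul_rpow (rpow_nonneg hc q) hS,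
    ← rpow_mul hc, mul_div_assoc]

/-- Sharma–Mittal entropy of the path graph `Pₙ` (`n ≥ 2`) based on the Laplacian:
`H_{q,r}(Pₙ) = (1/(1−r))·[(2/(n−1))^{q(1−r)/(1−q)}·(Σ_{j=0}^{n−1} sin(πj/(2n))^{2q})^{(1−r)/(1−q)} − 1]`. -/
theorem lapSM_pathGraph (n : ℕ) (hn : 2 ≤ n) (q r : ℝ)
    (hq0 : 0 < q) (hq1 : q ≠ 1) (hr : r ≠ 1) :
    lapSM (SimpleGraph.pathGraph n) q r =
      (1 / (1 - r)) *
        (((2 / ((n : ℝ) - 1)) ^ (q * (1 - r) / (1 - q))) *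
            (∑ j ∈ Finset.range n, Real.sin (Real.pi * j / (2 * n)) ^ (2 * q)) ^ ((1 - r) / (1 - q))
          - 1) :=
  lapSM_pathGraph_general n hn q r

end SMG
end

section
/- Let n ≥ 2 and let Kₙ be the complete graph on n vertices. For real parameters q > 0, q ≠ 1 and r ≠ 1, the Sharma–Mittal entropy of Kₙ based on the signless Laplacian satisfies H_{q,r}(Kₙ) = (1/(1−r))·[(((n−2)/n)^q·(n−1)^{1−q} + (2/n)^q)^{(1−r)/(1−q)} − 1]. -/
/-!
The signless Laplacian of `Kₙ` is `(n - 2) I + J` with `J` the all-ones matrix, and `J² = n J`,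
so `Q` is annihilated by `(X - (n - 2)) (X - (2n - 2))` and each of its eigenvalues is `n - 2`
or `2n - 2`. Since the eigenvalues sum to the trace `n (n - 1)`, the eigenvalue `2n - 2` is
simple. Dividing by the degree sum `n (n - 1)`, the density matrix has eigenvalues `2/n` once
and `(n - 2)/(n (n - 1))` with multiplicity `n - 1`, which gives the power sum in the formula.
-/

open Finset

namespace SMG

variable {V : Type*} [Fintype V] [DecidableEq V]

/-- The signless Laplacian matrix `Q(G) = D(G) + A(G)` of a simple graph. -/
def signlessLapMatrix (G : SimpleGraph V) [DecidableRel G.Adj] : Matrix V V ℝ :=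
  G.degMatrix ℝ + G.adjMatrix ℝ

/-- The signless Laplacian matrix of a simple graph is Hermitian. -/
lemma signlessLap_isHermitian (G : SimpleGraph V) [DecidableRel G.Adj] :
    (signlessLapMatrix G).IsHermitian := by
  refine Matrix.IsHermitian.add ?_ ?_
  · exact Matrix.isHermitian_diagonal _
  · rw [Matrix.IsHermitian, Matrix.conjTranspose_eq_transpose_of_trivial]
    exact G.isSymm_adjMatrix

/-- The eigenvalues (with multiplicity) of the density matrix `ρ_Q(G) = Q(G)/d`,
namely `γ v = μ v / d`. -/
noncomputable def signlessLapDensityEigen (G : SimpleGraph V) [DecidableRel G.Adj] : V → ℝ :=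
  fun v => (signlessLap_isHermitian G).eigenvalues v / (degSum G : ℝ)

/-- Sharma–Mittal entropy of a graph based on its signless Laplacian:
`H_{q,r}(G) = (1/(1-r)) * ((Σ γᵢ^q)^((1-r)/(1-q)) - 1)` with real powers. -/
noncomputable def signlessLapSM (G : SimpleGraph V) [DecidableRel G.Adj] (q r : ℝ) : ℝ :=
  (1 / (1 - r)) *
    ((∑ v, signlessLapDensityEigen G v ^ q) ^ ((1 - r) / (1 - q)) - 1)

open Matrix Polynomial

theorem _root_.Matrix.IsHermitian.isRoot_eigenvalues_of_aeval_eq_zero {𝕜 ι : Type*} [RCLike 𝕜]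
    [Fintype ι] [DecidableEq ι] {A : Matrix ι ι 𝕜} (hA : A.IsHermitian) {p : ℝ[X]}
    (hp : aeval A p = 0) (i : ι) : p.IsRoot (hA.eigenvalues i) := by
  have : Nonempty ι := ⟨i⟩
  have h := spectrum.subset_polynomial_aeval A p ⟨_, hA.eigenvalues_mem_spectrum_real i, rfl⟩
  rwa [hp, spectrum.zero_eq, Set.mem_singleton_iff] at h

theorem _root_.Fintype.sum_comp_of_forall_eq_or_eq {ι α R : Type*} [Fintype ι] [DecidableEq α]
    [CommRing R] {f : ι → α} {a b : α} (hf : ∀ i, f i = a ∨ f i = b) (g : α → R) :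
    ∑ i, g (f i) = ((Fintype.card ι : R) - #{i | f i = b}) * g a + #{i | f i = b} * g b := by
  have hcard := card_filter_add_card_filter_not (s := univ) (fun i => f i = b)
  have ha : ∀ i ∈ ({i | ¬f i = b} : Finset ι), f i = a := fun i hi =>
    (hf i).resolve_right (mem_filter.mp hi).2
  rw [← sum_filter_add_sum_filter_not univ (fun i => f i = b),
    sum_congr rfl fun i hi => congrArg g (mem_filter.mp hi).2,
    sum_congr rfl fun i hi => congrArg g (ha i hi), sum_const, sum_const, nsmul_eq_mul,
    nsmul_eq_mul, ← card_univ, ← hcard]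
  push_cast
  ring

theorem _root_.Real.mul_div_rpow_eq_rpow_mul_rpow_one_sub {x y : ℝ} (hx : 0 ≤ x) (hy : 0 < y)
    (q : ℝ) : y * (x / y) ^ q = x ^ q * y ^ (1 - q) := by
  rw [Real.div_rpow hx hy.le, Real.rpow_sub hy, Real.rpow_one]
  ring

theorem trace_signlessLapMatrix (G : SimpleGraph V) [DecidableRel G.Adj] :
    (signlessLapMatrix G).trace = degSum G := by
  simp [signlessLapMatrix, SimpleGraph.degMatrix, degSum]

theorem sum_eigenvalues_signlessLapMatrix (G : SimpleGraph V) [DecidableRel G.Adj] :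
    ∑ v, (signlessLap_isHermitian G).eigenvalues v = degSum G := by
  simpa [trace_signlessLapMatrix] using (signlessLap_isHermitian G).trace_eq_sum_eigenvalues.symm

theorem degSum_top : degSum (⊤ : SimpleGraph V) = Fintype.card V * (Fintype.card V - 1) := by
  simp [degSum, SimpleGraph.complete_graph_degree]

theorem signlessLapMatrix_top [Nonempty V] :
    signlessLapMatrix (⊤ : SimpleGraph V) = ((Fintype.card V : ℝ) - 2) • 1 + of fun _ _ => 1 := by
  ext i j
  by_cases h : i = j
  · subst h
    simp [signlessLapMatrix, SimpleGraph.degMatrix, SimpleGraph.complete_graph_degree,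
      Nat.cast_sub Fintype.card_pos]
    ring
  · simp [signlessLapMatrix, SimpleGraph.degMatrix, h]

theorem aeval_signlessLapMatrix_top [Nonempty V] :
    aeval (signlessLapMatrix (⊤ : SimpleGraph V))
      ((X - C ((Fintype.card V : ℝ) - 2)) * (X - C (2 * (Fintype.card V : ℝ) - 2))) = 0 := by
  obtain ⟨N, hN⟩ : ∃ N : ℝ, Fintype.card V = N := ⟨_, rfl⟩
  have hJ : (of fun _ _ => 1 : Matrix V V ℝ) * of (fun _ _ => 1) = N • of fun _ _ => 1 := by
    ext i j
    simp [mul_apply, hN]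
  rw [aeval_mul, aeval_sub, aeval_sub, aeval_X, aeval_C, aeval_C, Algebra.algebraMap_eq_smul_one,
    Algebra.algebraMap_eq_smul_one, signlessLapMatrix_top, hN, add_sub_cancel_left,
    show (N - 2) • (1 : Matrix V V ℝ) + of (fun _ _ => 1) - (2 * N - 2) • 1 =
      of (fun _ _ => 1) - N • 1 by module]
  simp [mul_sub, hJ]

theorem eigenvalues_signlessLapMatrix_top (v : V) :
    (signlessLap_isHermitian ⊤).eigenvalues v = (Fintype.card V : ℝ) - 2 ∨
      (signlessLap_isHermitian ⊤).eigenvalues v = 2 * (Fintype.card V : ℝ) - 2 := by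
  have : Nonempty V := ⟨v⟩
  simpa [sub_eq_zero] using
    (signlessLap_isHermitian ⊤).isRoot_eigenvalues_of_aeval_eq_zero aeval_signlessLapMatrix_top v

theorem card_filter_eigenvalues_signlessLapMatrix_top [Nonempty V] :
    (#{v | (signlessLap_isHermitian (⊤ : SimpleGraph V)).eigenvalues v =
      2 * (Fintype.card V : ℝ) - 2} : ℝ) = 1 := by
  have h := Fintype.sum_comp_of_forall_eq_or_eq (eigenvalues_signlessLapMatrix_top (V := V)) id
  simp only [id] at h
  rw [sum_eigenvalues_signlessLapMatrix, degSum_top] at h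
  push_cast [Nat.cast_sub Fintype.card_pos] at h
  have hN : (Fintype.card V : ℝ) ≠ 0 := by positivity
  exact mul_left_cancel₀ hN (by linear_combination -h)

theorem sum_signlessLapDensityEigen_top_rpow (hV : 2 ≤ Fintype.card V) (q : ℝ) :
    ∑ v, signlessLapDensityEigen (⊤ : SimpleGraph V) v ^ q =
      (((Fintype.card V : ℝ) - 2) / Fintype.card V) ^ q * ((Fintype.card V : ℝ) - 1) ^ (1 - q) +
        (2 / Fintype.card V : ℝ) ^ q := by
  have : Nonempty V := Fintype.card_pos_iff.mp (by omega)
  have h := Fintype.sum_comp_of_forall_eq_or_eq (eigenvalues_signlessLapMatrix_top (V := V))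
    (fun μ => (μ / degSum (⊤ : SimpleGraph V)) ^ q)
  simp only [card_filter_eigenvalues_signlessLapMatrix_top, degSum_top] at h
  simp only [signlessLapDensityEigen, degSum_top]
  push_cast [Nat.cast_sub Fintype.card_pos] at h ⊢
  rw [h]
  have hN : (2 : ℝ) ≤ Fintype.card V := by exact_mod_cast hV
  generalize (Fintype.card V : ℝ) = N at hN ⊢
  have hsimple : (2 * N - 2) / (N * (N - 1)) = 2 / N := by
    field_simp [show N - 1 ≠ 0 by linarith]
  rw [div_mul_eq_div_div, hsimple, one_mul,
    Real.mul_div_rpow_eq_rpow_mul_rpow_one_sub (div_nonneg (by linarith) (by linarith))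
      (by linarith)]

theorem signlessLapSM_completeGraph_general (n : ℕ) (hn : 2 ≤ n) (q r : ℝ) :
    signlessLapSM (⊤ : SimpleGraph (Fin n)) q r =
      (1 / (1 - r)) *
        (((((n : ℝ) - 2) / n) ^ q * ((n : ℝ) - 1) ^ (1 - q) + (2 / n : ℝ) ^ q)
            ^ ((1 - r) / (1 - q)) - 1) := by
  rw [signlessLapSM, sum_signlessLapDensityEigen_top_rpow (by simpa using hn), Fintype.card_fin]

/-- Sharma–Mittal entropy of the complete graph `Kₙ` (`n ≥ 2`) based on the signless Laplacian:
`H_{q,r}(Kₙ) = (1/(1−r))·[(((n−2)/n)^q·(n−1)^{1−q} + (2/n)^q)^{(1−r)/(1−q)} − 1]`. -/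
theorem signlessLapSM_completeGraph (n : ℕ) (hn : 2 ≤ n) (q r : ℝ)
    (hq0 : 0 < q) (hq1 : q ≠ 1) (hr : r ≠ 1) :
    signlessLapSM (⊤ : SimpleGraph (Fin n)) q r =
      (1 / (1 - r)) *
        (((((n : ℝ) - 2) / n) ^ q * ((n : ℝ) - 1) ^ (1 - q) + (2 / n : ℝ) ^ q)
            ^ ((1 - r) / (1 - q)) - 1) :=
  signlessLapSM_completeGraph_general n hn q r

end SMG
end

section
/- Let G₁ be a connected K-regular finite simple graph on n₁ vertices with K ≥ 1 and G₂ a connected S-regular finite simple graph on n₂ vertices with S ≥ 1, with Laplacian eigenvalues λ⁽¹⁾₁,…,λ⁽¹⁾_{n₁} and λ⁽²⁾₁,…,λ⁽²⁾_{n₂}. Let G = G₁ ⊗ G₂ be their Kronecker (tensor) product and let d be the degree sum of G. For real parameters q > 0, q ≠ 1 and r ≠ 1, the Sharma–Mittal entropy of G based on the Laplacian satisfies H_{q,r}(G) = (1/(1−r))·[(1/d)^{q(1−r)/(1−q)}·(Σ_{i=1}^{n₁} Σ_{j=1}^{n₂} (K·λ⁽²⁾ⱼ + S·λ⁽¹⁾ᵢ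 − λ⁽¹⁾ᵢ·λ⁽²⁾ⱼ)^q)^{(1−r)/(1−q)} − 1]. -/
open Finset

namespace SMG

variable {V : Type*} [Fintype V] [DecidableEq V]

/-- The Kronecker (tensor) product of two simple graphs: `(u,v) ~ (u',v')` iff
`u ~ u'` in `G₁` and `v ~ v'` in `G₂`. -/
def tensorProd {V₁ V₂ : Type*} (G₁ : SimpleGraph V₁) (G₂ : SimpleGraph V₂) :
    SimpleGraph (V₁ × V₂) where
  Adj x y := G₁.Adj x.1 y.1 ∧ G₂.Adj x.2 y.2
  symm := ⟨fun _ _ h => ⟨h.1.symm, h.2.symm⟩⟩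
  loopless := ⟨fun _ h => G₁.irrefl h.1⟩

instance {V₁ V₂ : Type*} (G₁ : SimpleGraph V₁) (G₂ : SimpleGraph V₂)
    [DecidableRel G₁.Adj] [DecidableRel G₂.Adj] :
    DecidableRel (tensorProd G₁ G₂).Adj := fun _ _ =>
  inferInstanceAs (Decidable (_ ∧ _))


/-! For a `K`-regular graph the adjacency matrix is `K • 1 - L`, so it is diagonalized by the
eigenvectors `U` of `L`, with eigenvalues `K - λᵢ`. Since `G₁ ⊗ G₂` is `KS`-regular with
adjacency matrix `A₁ ⊗ₖ A₂`, its Laplacian `KS • 1 - A₁ ⊗ₖ A₂` is diagonalized by `U₁ ⊗ₖ U₂`,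
with eigenvalues `KS - (K - λᵢ)(S - μⱼ) = K μⱼ + S λᵢ - λᵢ μⱼ`. Unitarily similar Hermitian
matrices share their characteristic polynomial, hence their eigenvalue multiset, so the power
sums agree; the factor `(1/d)^(q(1-r)/(1-q))` comes out of `∑ (λ/d)^q` by homogeneity of `rpow`. -/

section

open Matrix Polynomial Kronecker

variable {n : Type*} [Fintype n]

theorem _root_.Matrix.charpoly_unitary_conj [DecidableEq n] {R : Type*} [CommRing R] [StarRing R]
    {U : Matrix n n R} (hU : U ∈ unitary (Matrix n n R)) (M : Matrix n n R) :
    (U * M * star U).charpoly = M.charpoly := by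
  rw [charpoly_mul_comm, ← mul_assoc, Unitary.star_mul_self_of_mem hU, one_mul]

theorem _root_.Matrix.smul_one_sub_unitary_conj [DecidableEq n] {R : Type*} [CommRing R]
    [StarRing R] {U : Matrix n n R} (hU : U ∈ unitary (Matrix n n R)) (c : R) (D : Matrix n n R) :
    c • 1 - U * D * star U = U * (c • 1 - D) * star U := by
  rw [Matrix.mul_sub, Matrix.sub_mul, Matrix.mul_smul, Matrix.smul_mul, Matrix.mul_one,
    Unitary.mul_star_self_of_mem hU]

theorem _root_.Matrix.kronecker_unitary_conj {m R : Type*} [Fintype m] [CommRing R] [StarRing R]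
    (U₁ A₁ : Matrix n n R) (U₂ A₂ : Matrix m m R) :
    (U₁ * A₁ * star U₁) ⊗ₖ (U₂ * A₂ * star U₂) =
      (U₁ ⊗ₖ U₂) * (A₁ ⊗ₖ A₂) * star (U₁ ⊗ₖ U₂) := by
  rw [mul_kronecker_mul, mul_kronecker_mul, star_eq_conjTranspose, star_eq_conjTranspose,
    star_eq_conjTranspose, conjTranspose_kronecker]

theorem _root_.Matrix.IsHermitian.sum_comp_eigenvalues_of_eq_unitary_conj [DecidableEq n]
    {M : Type*} [AddCommMonoid M] {A : Matrix n n ℝ} (hA : A.IsHermitian) {U : Matrix n n ℝ}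
    (hU : U ∈ unitary (Matrix n n ℝ)) {f : n → ℝ} (h : A = U * diagonal f * star U)
    (g : ℝ → M) :
    ∑ i, g (hA.eigenvalues i) = ∑ i, g (f i) := by
  subst h
  have hroots : univ.val.map hA.eigenvalues = univ.val.map f := by
    have := hA.roots_charpoly_eq_eigenvalues
    rw [charpoly_unitary_conj hU, charpoly_diagonal, roots_prod _ _ (by
      simp [Finset.prod_ne_zero_iff, X_sub_C_ne_zero])] at this
    simpa using this.symm
  simpa [Multiset.map_map] using congrArg (fun s => (s.map g).sum) hroots

theorem _root_.Matrix.IsHermitian.eq_unitary_conj_diagonal_eigenvalues [DecidableEq n]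
    {A : Matrix n n ℝ} (hA : A.IsHermitian) :
    A = (hA.eigenvectorUnitary : Matrix n n ℝ) * diagonal hA.eigenvalues *
      star (hA.eigenvectorUnitary : Matrix n n ℝ) := by
  conv_lhs => rw [hA.spectral_theorem]
  simp [RCLike.ofReal_real_eq_id]

theorem _root_.Matrix.IsHermitian.smul_one_sub_eq_unitary_conj [DecidableEq n]
    {A : Matrix n n ℝ} (hA : A.IsHermitian) (c : ℝ) :
    c • 1 - A = (hA.eigenvectorUnitary : Matrix n n ℝ) *
      diagonal (fun i => c - hA.eigenvalues i) * star (hA.eigenvectorUnitary : Matrix n n ℝ) := by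
  conv_lhs => rw [hA.eq_unitary_conj_diagonal_eigenvalues]
  rw [smul_one_sub_unitary_conj hA.eigenvectorUnitary.2, smul_one_eq_diagonal, diagonal_sub]

theorem _root_.SimpleGraph.IsRegularOfDegree.lapMatrix_eq {V R : Type*} [Fintype V]
    [DecidableEq V] [Ring R] {G : SimpleGraph V} [DecidableRel G.Adj] {K : ℕ}
    (hG : G.IsRegularOfDegree K) :
    G.lapMatrix R = (K : R) • 1 - G.adjMatrix R := by
  rw [SimpleGraph.lapMatrix, SimpleGraph.degMatrix, smul_one_eq_diagonal]
  exact congrArg (diagonal · - _) (funext fun v => congrArg Nat.cast (hG v))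

variable {V₁ V₂ : Type*} {G₁ : SimpleGraph V₁} {G₂ : SimpleGraph V₂} [DecidableRel G₁.Adj]
  [DecidableRel G₂.Adj]

theorem degree_tensorProd [Fintype V₁] [Fintype V₂] (u : V₁) (v : V₂) :
    (tensorProd G₁ G₂).degree (u, v) = G₁.degree u * G₂.degree v := by
  rw [← SimpleGraph.card_neighborFinset_eq_degree, ← SimpleGraph.card_neighborFinset_eq_degree,
    ← SimpleGraph.card_neighborFinset_eq_degree, ← card_product]
  congr 1
  ext ⟨a, b⟩
  simp only [SimpleGraph.mem_neighborFinset, mem_product]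
  rfl

theorem isRegularOfDegree_tensorProd [Fintype V₁] [Fintype V₂] {K S : ℕ}
    (hG₁ : G₁.IsRegularOfDegree K) (hG₂ : G₂.IsRegularOfDegree S) :
    (tensorProd G₁ G₂).IsRegularOfDegree (K * S) :=
  fun p => by rw [degree_tensorProd, hG₁ p.1, hG₂ p.2]

theorem adjMatrix_tensorProd (R : Type*) [NonAssocSemiring R] :
    (tensorProd G₁ G₂).adjMatrix R = G₁.adjMatrix R ⊗ₖ G₂.adjMatrix R := by
  ext ⟨a, b⟩ ⟨c, e⟩
  simp only [SimpleGraph.adjMatrix_apply, kronecker_apply, ite_zero_mul_ite_zero, mul_one]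
  rfl

theorem lapMatrix_tensorProd_eq_unitary_conj [Fintype V₁] [DecidableEq V₁] [Fintype V₂]
    [DecidableEq V₂] {K S : ℕ} (hG₁ : G₁.IsRegularOfDegree K) (hG₂ : G₂.IsRegularOfDegree S) :
    ∃ U ∈ unitary (Matrix (V₁ × V₂) (V₁ × V₂) ℝ), (tensorProd G₁ G₂).lapMatrix ℝ =
      U * diagonal (fun p => (K : ℝ) * (lap_isHermitian G₂).eigenvalues p.2 +
        S * (lap_isHermitian G₁).eigenvalues p.1 -
          (lap_isHermitian G₁).eigenvalues p.1 * (lap_isHermitian G₂).eigenvalues p.2) *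
        star U := by
  have hU := kronecker_mem_unitary (lap_isHermitian G₁).eigenvectorUnitary.2
    (lap_isHermitian G₂).eigenvectorUnitary.2
  refine ⟨_, hU, ?_⟩
  have hA₁ : G₁.adjMatrix ℝ = (K : ℝ) • 1 - G₁.lapMatrix ℝ := by
    rw [hG₁.lapMatrix_eq, sub_sub_cancel]
  have hA₂ : G₂.adjMatrix ℝ = (S : ℝ) • 1 - G₂.lapMatrix ℝ := by
    rw [hG₂.lapMatrix_eq, sub_sub_cancel]
  rw [(isRegularOfDegree_tensorProd hG₁ hG₂).lapMatrix_eq, adjMatrix_tensorProd, hA₁, hA₂,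
    (lap_isHermitian G₁).smul_one_sub_eq_unitary_conj,
    (lap_isHermitian G₂).smul_one_sub_eq_unitary_conj, kronecker_unitary_conj,
    smul_one_sub_unitary_conj hU, diagonal_kronecker_diagonal, smul_one_eq_diagonal, diagonal_sub]
  congr 3
  funext p
  push_cast
  ring

end

theorem sum_div_rpow_rpow {ι : Type*} (s : Finset ι) {x : ι → ℝ} (hx : ∀ i ∈ s, 0 ≤ x i)
    {d : ℝ} (hd : 0 ≤ d) (q e : ℝ) :
    (∑ i ∈ s, (x i / d) ^ q) ^ e = (1 / d) ^ (q * e) * (∑ i ∈ s, x i ^ q) ^ e := by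
  have hsum : 0 ≤ ∑ i ∈ s, x i ^ q := sum_nonneg fun i hi => Real.rpow_nonneg (hx i hi) q
  rw [Finset.sum_congr rfl fun i hi => Real.div_rpow (hx i hi) hd q, ← Finset.sum_div,
    Real.div_rpow hsum (Real.rpow_nonneg hd q), ← Real.rpow_mul hd, Real.div_rpow zero_le_one hd,
    Real.one_rpow, one_div_mul_eq_div]

theorem lapSM_eq_sum_eigenvalues_rpow {V : Type*} [Fintype V] [DecidableEq V]
    (G : SimpleGraph V) [DecidableRel G.Adj] (q r : ℝ) :
    lapSM G q r = (1 / (1 - r)) * ((1 / (degSum G : ℝ)) ^ (q * (1 - r) / (1 - q)) *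
      (∑ v, (lap_isHermitian G).eigenvalues v ^ q) ^ ((1 - r) / (1 - q)) - 1) := by
  simp only [lapSM, lapDensityEigen]
  rw [sum_div_rpow_rpow _
    (fun v _ => (SimpleGraph.posSemidef_lapMatrix ℝ G).eigenvalues_nonneg v) (Nat.cast_nonneg _),
    mul_div_assoc]

theorem lapSM_tensorProd_general {V₁ V₂ : Type*}
    [Fintype V₁] [DecidableEq V₁] [Fintype V₂] [DecidableEq V₂]
    (G₁ : SimpleGraph V₁) (G₂ : SimpleGraph V₂) [DecidableRel G₁.Adj] [DecidableRel G₂.Adj]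
    (K S : ℕ)
    (hG₁reg : G₁.IsRegularOfDegree K) (hG₂reg : G₂.IsRegularOfDegree S)
    (q r : ℝ) :
    lapSM (tensorProd G₁ G₂) q r =
      (1 / (1 - r)) *
        ((1 / (degSum (tensorProd G₁ G₂) : ℝ)) ^ (q * (1 - r) / (1 - q)) *
          (∑ i, ∑ j,
            ((K : ℝ) * (lap_isHermitian G₂).eigenvalues j +
              (S : ℝ) * (lap_isHermitian G₁).eigenvalues i -
              (lap_isHermitian G₁).eigenvalues i * (lap_isHermitian G₂).eigenvalues j) ^ q)
            ^ ((1 - r) / (1 - q)) - 1) := by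
  obtain ⟨U, hU, hL⟩ := lapMatrix_tensorProd_eq_unitary_conj hG₁reg hG₂reg
  rw [lapSM_eq_sum_eigenvalues_rpow,
    (lap_isHermitian _).sum_comp_eigenvalues_of_eq_unitary_conj hU hL (· ^ q),
    Fintype.sum_prod_type]

/-- Sharma–Mittal entropy of the Kronecker (tensor) product `G₁ ⊗ G₂` of a connected
`K`-regular graph and a connected `S`-regular graph, whose Laplacian eigenvalues are
`K·λ⁽²⁾ⱼ + S·λ⁽¹⁾ᵢ − λ⁽¹⁾ᵢ·λ⁽²⁾ⱼ`. -/
theorem lapSM_tensorProd {V₁ V₂ : Type*}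
    [Fintype V₁] [DecidableEq V₁] [Fintype V₂] [DecidableEq V₂]
    (G₁ : SimpleGraph V₁) (G₂ : SimpleGraph V₂) [DecidableRel G₁.Adj] [DecidableRel G₂.Adj]
    (K S : ℕ) (hK : 1 ≤ K) (hS : 1 ≤ S)
    (hG₁conn : G₁.Connected) (hG₂conn : G₂.Connected)
    (hG₁reg : G₁.IsRegularOfDegree K) (hG₂reg : G₂.IsRegularOfDegree S)
    (q r : ℝ) (hq0 : 0 < q) (hq1 : q ≠ 1) (hr : r ≠ 1) :
    lapSM (tensorProd G₁ G₂) q r =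
      (1 / (1 - r)) *
        ((1 / (degSum (tensorProd G₁ G₂) : ℝ)) ^ (q * (1 - r) / (1 - q)) *
          (∑ i, ∑ j,
            ((K : ℝ) * (lap_isHermitian G₂).eigenvalues j +
              (S : ℝ) * (lap_isHermitian G₁).eigenvalues i -
              (lap_isHermitian G₁).eigenvalues i * (lap_isHermitian G₂).eigenvalues j) ^ q)
            ^ ((1 - r) / (1 - q)) - 1) :=
  lapSM_tensorProd_general G₁ G₂ K S hG₁reg hG₂reg q r

end SMG
end
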